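/- arXiv:2209.07304 — 3 statements merged into one kernel-verified Lean document; each statement's English description precedes it below -/
import Mathlib

section
/- If x* satisfies the single-virus SIS fixed point equations for (A, τ), where A is the adjacency matrix of a connected undirected graph on N ≥ 1 vertices and τ > 0, then the largest entry satisfies max_{i} x*_i ≥ 1 − 1/(τ·λ(A)). -/
open Matrix Finset

/-- Spectral radius of a real matrix: supremum of absolute values of its complex eigenvalues. -/
noncomputable def specRad {N : ℕ} (M : Matrix (Fin N) (Fin N) ℝ) : ℝ :=
  sSup ((fun z : ℂ => ‖z‖) '' spectrum ℂ (M.map Complex.ofReal))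

/-- `A` is the adjacency matrix of a connected undirected graph:
symmetric, 0/1 entries, zero diagonal, and irreducible (connectivity). -/
def IsConnectedAdjMatrix {N : ℕ} (A : Matrix (Fin N) (Fin N) ℝ) : Prop :=
  A.IsSymm ∧ (∀ i j, A i j = 0 ∨ A i j = 1) ∧ (∀ i, A i i = 0) ∧
    (∀ i j, i ≠ j → ∃ k : ℕ, 0 < (A ^ k) i j)

/-- `x` satisfies the single-virus SIS fixed point equations for `(A, τ)`. -/
def IsSISFixedPoint {N : ℕ} (A : Matrix (Fin N) (Fin N) ℝ) (τ : ℝ)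
    (x : Fin N → ℝ) : Prop :=
  (∀ i, 0 < x i ∧ x i < 1) ∧ (∀ i, ∑ j, A i j * x j = x i / (τ * (1 - x i)))

/-!
By the Collatz–Wielandt bound, a nonnegative matrix `A` with `A x ≤ c x` for some positive `x`
has spectral radius at most `c`. At an SIS fixed point,
`(A x*)_i = x*_i / (τ (1 - x*_i)) ≤ x*_i / (τ (1 - m))` with `m = max_i x*_i`,
so `λ(A) ≤ 1 / (τ (1 - m))`, which rearranges to the claim once `λ(A) > 0`. Positivity holds
because `A` is symmetric and nonzero, hence has a nonzero real eigenvalue.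
-/

section CollatzWielandt

variable {n : Type*} [Fintype n] {A : Matrix n n ℝ} {x : n → ℝ} {c : ℝ}

theorem norm_le_of_mulVec_eq_smul_of_mulVec_le (hA : ∀ i j, 0 ≤ A i j) (hx : ∀ i, 0 < x i)
    (hc : ∀ i, (A *ᵥ x) i ≤ c * x i) {μ : ℂ} {v : n → ℂ} (hv : v ≠ 0)
    (hμv : A.map Complex.ofReal *ᵥ v = μ • v) : ‖μ‖ ≤ c := by
  -- read the eigen-equation at a coordinate maximizing `‖v i‖ / x i`
  obtain ⟨j, hj⟩ := Function.ne_iff.mp hv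
  obtain ⟨i, -, hi⟩ := exists_max_image univ (fun i => ‖v i‖ / x i) ⟨j, mem_univ j⟩
  set r := ‖v i‖ / x i
  have hr : 0 < r := (div_pos (norm_pos_iff.mpr hj) (hx j)).trans_le (hi j (mem_univ j))
  have hvr : ∀ k, ‖v k‖ ≤ r * x k := fun k => (div_le_iff₀ (hx k)).mp (hi k (mem_univ k))
  have key : ‖μ‖ * (r * x i) ≤ c * (r * x i) := calc
    ‖μ‖ * (r * x i) = ‖(A.map Complex.ofReal *ᵥ v) i‖ := by
        rw [hμv, Pi.smul_apply, smul_eq_mul, norm_mul, div_mul_cancel₀ _ (hx i).ne']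
    _ ≤ ∑ k, A i k * ‖v k‖ := by
        refine (norm_sum_le _ _).trans_eq (sum_congr rfl fun k _ => ?_)
        simp [abs_of_nonneg (hA i k)]
    _ ≤ ∑ k, A i k * (r * x k) :=
        sum_le_sum fun k _ => mul_le_mul_of_nonneg_left (hvr k) (hA i k)
    _ = r * (A *ᵥ x) i := by
        simp only [mulVec, dotProduct, mul_sum]
        exact sum_congr rfl fun k _ => by ring
    _ ≤ r * (c * x i) := mul_le_mul_of_nonneg_left (hc i) hr.le
    _ = c * (r * x i) := by ring
  exact le_of_mul_le_mul_right key (mul_pos hr (hx i))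

theorem norm_le_of_mem_spectrum_of_mulVec_le [DecidableEq n] (hA : ∀ i j, 0 ≤ A i j)
    (hx : ∀ i, 0 < x i) (hc : ∀ i, (A *ᵥ x) i ≤ c * x i) {μ : ℂ}
    (hμ : μ ∈ spectrum ℂ (A.map Complex.ofReal)) : ‖μ‖ ≤ c := by
  rw [← Matrix.spectrum_toLin', ← Module.End.hasEigenvalue_iff_mem_spectrum] at hμ
  obtain ⟨v, hv⟩ := hμ.exists_hasEigenvector
  exact norm_le_of_mulVec_eq_smul_of_mulVec_le hA hx hc hv.2 (by simpa using hv.apply_eq_smul)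

end CollatzWielandt

section SpectralRadius

variable {N : ℕ} {A : Matrix (Fin N) (Fin N) ℝ}

theorem norm_le_specRad {μ : ℂ} (hμ : μ ∈ spectrum ℂ (A.map Complex.ofReal)) :
    ‖μ‖ ≤ specRad A :=
  le_csSup ((Matrix.finite_spectrum _).image _).bddAbove ⟨μ, hμ, rfl⟩

theorem specRad_le_of_mulVec_le {x : Fin N → ℝ} {c : ℝ} (hA : ∀ i j, 0 ≤ A i j)
    (hx : ∀ i, 0 < x i) (hc₀ : 0 ≤ c) (hc : ∀ i, (A *ᵥ x) i ≤ c * x i) : specRad A ≤ c :=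
  Real.sSup_le (by rintro _ ⟨μ, hμ, rfl⟩; exact norm_le_of_mem_spectrum_of_mulVec_le hA hx hc hμ)
    hc₀

theorem specRad_pos_of_isSymm (hA : A.IsSymm) (hA₀ : A ≠ 0) : 0 < specRad A := by
  have hH : (A.map Complex.ofReal).IsHermitian :=
    (isHermitian_iff_isSymm.mpr hA).map _ fun a => (Complex.conj_ofReal a).symm
  have hH₀ : A.map Complex.ofReal ≠ 0 := fun h =>
    hA₀ (Matrix.map_injective Complex.ofReal_injective (by simpa using h))
  obtain ⟨k, hk⟩ := Function.ne_iff.mp (hH.eigenvalues_eq_zero_iff.not.mpr hH₀)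
  calc 0 < ‖((hH.eigenvalues k : ℝ) : ℂ)‖ := by simpa using hk
    _ ≤ specRad A := norm_le_specRad (hH.spectrum_eq_image_range ▸ ⟨_, ⟨k, rfl⟩, rfl⟩)

end SpectralRadius

namespace IsSISFixedPoint

variable {N : ℕ} {A : Matrix (Fin N) (Fin N) ℝ} {τ : ℝ} {x : Fin N → ℝ}

theorem mulVec_le (hx : IsSISFixedPoint A τ x) (hτ : 0 < τ) {m : ℝ} (hxm : ∀ i, x i ≤ m)
    (hm : m < 1) (i : Fin N) : (A *ᵥ x) i ≤ 1 / (τ * (1 - m)) * x i := by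
  calc (A *ᵥ x) i = x i / (τ * (1 - x i)) := hx.2 i
    _ ≤ x i / (τ * (1 - m)) := by
        gcongr
        exacts [(hx.1 i).1.le, hxm i]
    _ = 1 / (τ * (1 - m)) * x i := by ring

theorem ne_zero [NeZero N] (hx : IsSISFixedPoint A τ x) (hτ : τ ≠ 0) : A ≠ 0 := by
  rintro rfl
  obtain ⟨hx₀, hx₁⟩ := hx.1 0
  have h := hx.2 0
  simp only [Matrix.zero_apply, zero_mul, sum_const_zero] at h
  exact div_ne_zero hx₀.ne' (mul_ne_zero hτ (by linarith)) h.symm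

end IsSISFixedPoint

/-- If `x*` satisfies the single-virus SIS fixed point equations for `(A, τ)`,
where `A` is the adjacency matrix of a connected undirected graph on `N ≥ 1` vertices and
`τ > 0`, then the largest entry satisfies `max_i x*_i ≥ 1 − 1/(τ·λ(A))`. -/
theorem max_entry_lower_bound {N : ℕ} (hN : 1 ≤ N)
    (A : Matrix (Fin N) (Fin N) ℝ) (hA : IsConnectedAdjMatrix A)
    (τ : ℝ) (hτ : 0 < τ)
    (xstar : Fin N → ℝ) (hx : IsSISFixedPoint A τ xstar) :
    1 - 1 / (τ * specRad A) ≤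
      Finset.univ.sup' ⟨⟨0, hN⟩, Finset.mem_univ _⟩ xstar := by
  obtain ⟨hsymm, h01, -, -⟩ := hA
  have hA₀ : ∀ i j, 0 ≤ A i j := fun i j => by rcases h01 i j with h | h <;> simp [h]
  have : NeZero N := ⟨by omega⟩
  set m := univ.sup' ⟨⟨0, hN⟩, mem_univ _⟩ xstar
  have hxm : ∀ i, xstar i ≤ m := fun i => le_sup' xstar (mem_univ i)
  have hm : m < 1 := (sup'_lt_iff _).mpr fun i _ => (hx.1 i).2
  have hτm : 0 < τ * (1 - m) := mul_pos hτ (by linarith)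
  have hρ_pos : 0 < specRad A := specRad_pos_of_isSymm hsymm (hx.ne_zero hτ.ne')
  have hρ_le : specRad A ≤ 1 / (τ * (1 - m)) :=
    specRad_le_of_mulVec_le hA₀ (fun i => (hx.1 i).1) (by positivity) (hx.mulVec_le hτ hxm hm)
  have : 1 - m ≤ 1 / (τ * specRad A) := by
    rw [le_div_iff₀ hτm] at hρ_le
    rw [le_div_iff₀ (by positivity)]
    linarith
  linarith
end

section
/- If x* satisfies the single-virus SIS fixed point equations for (A, τ), where A is the adjacency matrix of a connected undirected graph on N ≥ 1 vertices and τ > 0, then the Rayleigh-quotient bound τ·λ(A) ≥ (Σ_{i=1}^N (x*_i)²/(1 − x*_i)) / (Σ_{i=1}^N (x*_i)²) holds. -/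
open Matrix Finset

/-!
Multiplying the `i`-th fixed point equation by `τ x*_i` and summing over `i` gives
`Σ_i (x*_i)² / (1 - x*_i) = τ · x*ᵀ A x*`. Since `A` is real symmetric, `λ(A) I - A` has
nonnegative spectrum and is therefore positive semidefinite, so `x*ᵀ A x* ≤ λ(A) · x*ᵀ x*`.
-/

theorem Matrix.ofReal_mem_spectrum_map {n : Type*} [Fintype n] [DecidableEq n]
    {M : Matrix n n ℝ} {μ : ℝ} (hμ : μ ∈ spectrum ℝ M) :
    (μ : ℂ) ∈ spectrum ℂ (M.map Complex.ofReal) := by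
  rw [Matrix.mem_spectrum_iff_isRoot_charpoly] at hμ ⊢
  rw [show M.map Complex.ofReal = M.map Complex.ofRealHom from rfl, Matrix.charpoly_map]
  exact Polynomial.IsRoot.map hμ

theorem specRad_nonneg {N : ℕ} (M : Matrix (Fin N) (Fin N) ℝ) : 0 ≤ specRad M :=
  Real.sSup_nonneg <| by
    rintro _ ⟨z, -, rfl⟩
    exact norm_nonneg z

theorem le_specRad_of_mem_spectrum {N : ℕ} {M : Matrix (Fin N) (Fin N) ℝ} {μ : ℝ}
    (hμ : μ ∈ spectrum ℝ M) : μ ≤ specRad M := by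
  have hbdd : BddAbove ((fun z : ℂ => ‖z‖) '' spectrum ℂ (M.map Complex.ofReal)) :=
    ((Matrix.finite_spectrum _).image _).bddAbove
  calc μ ≤ ‖(μ : ℂ)‖ := by simpa using le_abs_self μ
    _ ≤ specRad M := le_csSup hbdd ⟨_, Matrix.ofReal_mem_spectrum_map hμ, rfl⟩

theorem Matrix.IsHermitian.posSemidef_algebraMap_sub {n : Type*} [Fintype n] [DecidableEq n]
    {A : Matrix n n ℝ} (hA : A.IsHermitian) {r : ℝ} (hr : ∀ μ ∈ spectrum ℝ A, μ ≤ r) :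
    (algebraMap ℝ (Matrix n n ℝ) r - A).PosSemidef := by
  have hr_herm : (algebraMap ℝ (Matrix n n ℝ) r).IsHermitian := by
    rw [algebraMap_eq_diagonal]
    exact isHermitian_diagonal _
  refine Matrix.posSemidef_iff_isHermitian_and_spectrum_nonneg.mpr ⟨hr_herm.sub hA, ?_⟩
  rw [← spectrum.singleton_sub_eq]
  rintro _ ⟨_, rfl, μ, hμ, rfl⟩
  exact sub_nonneg.mpr (hr μ hμ)

theorem Matrix.IsSymm.dotProduct_mulVec_le_specRad_mul {N : ℕ} {A : Matrix (Fin N) (Fin N) ℝ}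
    (hA : A.IsSymm) (x : Fin N → ℝ) : x ⬝ᵥ A *ᵥ x ≤ specRad A * (x ⬝ᵥ x) := by
  have hpsd := (isHermitian_iff_isSymm.mpr hA).posSemidef_algebraMap_sub
    fun _ => le_specRad_of_mem_spectrum
  simpa only [star_trivial, Algebra.algebraMap_eq_smul_one, sub_mulVec, smul_mulVec, one_mulVec,
    dotProduct_sub, dotProduct_smul, smul_eq_mul, sub_nonneg] using hpsd.dotProduct_mulVec_nonneg x

theorem IsSISFixedPoint.sum_sq_div_one_sub_eq {N : ℕ} {A : Matrix (Fin N) (Fin N) ℝ} {τ : ℝ}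
    {x : Fin N → ℝ} (hx : IsSISFixedPoint A τ x) (hτ : τ ≠ 0) :
    ∑ i, x i ^ 2 / (1 - x i) = τ * (x ⬝ᵥ A *ᵥ x) := by
  rw [dotProduct, Finset.mul_sum]
  refine Finset.sum_congr rfl fun i _ => ?_
  have hxi : 1 - x i ≠ 0 := sub_ne_zero.mpr (hx.1 i).2.ne'
  rw [mulVec, dotProduct, hx.2 i]
  field_simp

theorem rayleigh_quotient_bound_general {N : ℕ}
    (A : Matrix (Fin N) (Fin N) ℝ) (hA : IsConnectedAdjMatrix A)
    (τ : ℝ) (hτ : 0 < τ)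
    (xstar : Fin N → ℝ) (hx : IsSISFixedPoint A τ xstar) :
    (∑ i, (xstar i) ^ 2 / (1 - xstar i)) / (∑ i, (xstar i) ^ 2) ≤ τ * specRad A := by
  have hquad : ∑ i, xstar i ^ 2 = xstar ⬝ᵥ xstar := by simp only [dotProduct, sq]
  refine div_le_of_le_mul₀ (sum_nonneg fun i _ => sq_nonneg _)
    (mul_nonneg hτ.le (specRad_nonneg A)) ?_
  rw [hx.sum_sq_div_one_sub_eq hτ.ne', hquad, mul_assoc]
  exact mul_le_mul_of_nonneg_left (hA.1.dotProduct_mulVec_le_specRad_mul xstar) hτ.le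

/-- If `x*` satisfies the single-virus SIS fixed point equations for `(A, τ)`,
where `A` is the adjacency matrix of a connected undirected graph on `N ≥ 1` vertices and
`τ > 0`, then the Rayleigh-quotient bound
`τ·λ(A) ≥ (Σ_i (x*_i)²/(1 − x*_i)) / (Σ_i (x*_i)²)` holds. -/
theorem rayleigh_quotient_bound {N : ℕ} (hN : 1 ≤ N)
    (A : Matrix (Fin N) (Fin N) ℝ) (hA : IsConnectedAdjMatrix A)
    (τ : ℝ) (hτ : 0 < τ)
    (xstar : Fin N → ℝ) (hx : IsSISFixedPoint A τ xstar) :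
    (∑ i, (xstar i) ^ 2 / (1 - xstar i)) / (∑ i, (xstar i) ^ 2) ≤ τ * specRad A :=
  rayleigh_quotient_bound_general A hA τ hτ xstar hx
end

section
/- Let A and B be adjacency matrices of connected undirected graphs on the same N vertices, let τ₁, τ₂ > 0 satisfy τ₁·λ(A) > 1 and τ₂·λ(B) > 1, let x* satisfy the single-virus SIS fixed point equations for (A, τ₁) and y* the single-virus SIS fixed point equations for (B, τ₂), and suppose the coexistence conditions τ₁·λ(diag(1 − y*)·A) > 1 and τ₂·λ(diag(1 − x*)·B) > 1 hold. Then every coexistence equilibrium (x̂, ŷ) for (A, B, τ₁, τ₂) satisfies (1/N)·(Σ_i x̂_i + Σ_i ŷ_i) < 1 − 1/(τ₁·λ(A) + τ₂·λ(B) − 1). -/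
open Matrix Finset

/-- `(x, y)` is a coexistence equilibrium of the bi-SIS system for `(A, B, τ₁, τ₂)`. -/
def IsCoexistenceEq {N : ℕ} (A B : Matrix (Fin N) (Fin N) ℝ) (τ₁ τ₂ : ℝ)
    (x y : Fin N → ℝ) : Prop :=
  (∀ i, 0 < x i) ∧ (∀ i, 0 < y i) ∧ (∀ i, x i + y i < 1) ∧
    (∀ i, ∑ j, A i j * x j = x i / (τ₁ * (1 - x i - y i))) ∧
    (∀ i, ∑ j, B i j * y j = y i / (τ₂ * (1 - x i - y i)))

/-!
Put `g i = 1 / (1 - x̂ i - ŷ i)`. The equilibrium equations read `τ₁ A x̂ = diag g x̂` and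
`τ₂ B ŷ = diag g ŷ`, so the Rayleigh bound gives `∑ g x̂² ≤ τ₁ λ(A) ∑ x̂²` and
`∑ g ŷ² ≤ τ₂ λ(B) ∑ ŷ²`. Controlling the cross term by a `g - 1`-weighted Cauchy–Schwarz
inequality turns these into `∑ g z² < γ ∑ z²` for `z = x̂ + ŷ` and `γ = τ₁ λ(A) + τ₂ λ(B) - 1`.
As `g` increases with `z`, Chebyshev's sum inequality yields `∑ g < N γ`, and then the AM–HM
inequality `N² ≤ ∑ (1 - z) * ∑ g` gives `∑ (1 - z) > N / γ`.
-/
lemma ofReal_mem_spectrum_map_ofReal {n : Type*} [Fintype n] [DecidableEq n]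
    {M : Matrix n n ℝ} {r : ℝ} (hr : r ∈ spectrum ℝ M) :
    (r : ℂ) ∈ spectrum ℂ (M.map Complex.ofReal) := by
  have hmap : algebraMap ℂ _ (r : ℂ) - M.map Complex.ofReal =
      Complex.ofRealHom.mapMatrix (algebraMap ℝ _ r - M) := by
    ext i j
    simp [Matrix.algebraMap_eq_diagonal, Matrix.diagonal_apply, apply_ite]
  rw [spectrum.mem_iff, Matrix.isUnit_iff_isUnit_det, isUnit_iff_ne_zero, not_not] at hr ⊢
  rw [hmap, ← RingHom.map_det, hr, map_zero]

lemma abs_le_specRad_of_mem_spectrum {N : ℕ} {M : Matrix (Fin N) (Fin N) ℝ} {r : ℝ}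
    (hr : r ∈ spectrum ℝ M) : |r| ≤ specRad M := by
  have hbdd := ((M.map Complex.ofReal).finite_spectrum.image (fun z : ℂ => ‖z‖)).bddAbove
  simpa [specRad] using le_csSup hbdd ⟨_, ofReal_mem_spectrum_map_ofReal hr, rfl⟩

lemma Matrix.IsHermitian.posSemidef_smul_one_sub {n : Type*} [Fintype n] [DecidableEq n]
    {M : Matrix n n ℝ} (hM : M.IsHermitian) {c : ℝ} (hc : ∀ k, hM.eigenvalues k ≤ c) :
    (c • 1 - M).PosSemidef := by
  have hdiag : (diagonal fun k => c - hM.eigenvalues k).PosSemidef :=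
    posSemidef_diagonal_iff.mpr fun k => sub_nonneg.mpr (hc k)
  convert hdiag.mul_mul_conjTranspose_same (hM.eigenvectorUnitary : Matrix n n ℝ) using 1
  calc c • 1 - M = Unitary.conjStarAlgAut ℝ _ hM.eigenvectorUnitary
        (c • 1 - diagonal (RCLike.ofReal ∘ hM.eigenvalues)) := by
        conv_lhs => rw [hM.spectral_theorem]
        rw [map_sub, map_smul, map_one]
    _ = _ := by
        rw [Unitary.conjStarAlgAut_apply, ← diagonal_one, ← diagonal_smul, diagonal_sub]
        simp [star_eq_conjTranspose]

lemma dotProduct_mulVec_le_specRad_mul {N : ℕ} {M : Matrix (Fin N) (Fin N) ℝ} (hM : M.IsSymm)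
    (v : Fin N → ℝ) : v ⬝ᵥ (M *ᵥ v) ≤ specRad M * (v ⬝ᵥ v) := by
  have hH : M.IsHermitian := hM
  have hc : ∀ k, hH.eigenvalues k ≤ specRad M := fun k =>
    (le_abs_self _).trans (abs_le_specRad_of_mem_spectrum (hH.eigenvalues_mem_spectrum_real k))
  simpa [sub_mulVec, dotProduct_sub, smul_mulVec] using
    (hH.posSemidef_smul_one_sub hc).dotProduct_mulVec_nonneg v

lemma sum_sq_div_le_specRad_mul {N : ℕ} {A : Matrix (Fin N) (Fin N) ℝ} (hA : A.IsSymm)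
    {τ : ℝ} (hτ : 0 < τ) {x w : Fin N → ℝ} (h : ∀ i, ∑ j, A i j * x j = x i / (τ * w i)) :
    ∑ i, x i ^ 2 / w i ≤ τ * specRad A * ∑ i, x i ^ 2 := by
  calc ∑ i, x i ^ 2 / w i = τ * (x ⬝ᵥ (A *ᵥ x)) := by
        simp only [dotProduct, mulVec, h, mul_sum]
        refine sum_congr rfl fun i _ => ?_
        field_simp
    _ ≤ τ * (specRad A * (x ⬝ᵥ x)) := by gcongr; exact dotProduct_mulVec_le_specRad_mul hA x
    _ = τ * specRad A * ∑ i, x i ^ 2 := by simp only [dotProduct, sq, mul_assoc]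

section WeightedSums

variable {ι : Type*} [Fintype ι]

lemma card_sq_le_sum_mul_sum_one_div {u : ι → ℝ} (hu : ∀ i, 0 < u i) :
    (Fintype.card ι : ℝ) ^ 2 ≤ (∑ i, u i) * ∑ i, 1 / u i := by
  simpa using sum_sq_le_sum_mul_sum_of_sq_le_mul univ (r := fun _ => (1 : ℝ))
    (fun i _ => (hu i).le) (fun i _ => (one_div_pos.mpr (hu i)).le)
    fun i _ => by rw [mul_one_div_cancel (hu i).ne', one_pow]

variable [Nonempty ι]

lemma sum_add_sq_div_lt {x y w : ι → ℝ} {α β : ℝ} (hα : 1 < α) (hβ : 1 < β)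
    (hx : ∀ i, 0 < x i) (hy : ∀ i, 0 < y i) (hw : ∀ i, 0 < w i) (hw1 : ∀ i, w i ≤ 1)
    (hxα : ∑ i, x i ^ 2 / w i ≤ α * ∑ i, x i ^ 2)
    (hyβ : ∑ i, y i ^ 2 / w i ≤ β * ∑ i, y i ^ 2) :
    ∑ i, (x i + y i) ^ 2 / w i < (α + β - 1) * ∑ i, (x i + y i) ^ 2 := by
  set c : ι → ℝ := fun i => (w i)⁻¹ - 1
  have hc : ∀ i, 0 ≤ c i := fun i => sub_nonneg.mpr (one_le_inv₀ (hw i) |>.mpr (hw1 i))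
  have hdiv : ∀ t : ι → ℝ, ∑ i, t i / w i = ∑ i, t i + ∑ i, t i * c i := fun t => by
    rw [← sum_add_distrib]
    exact sum_congr rfl fun i _ => by simp only [c]; ring
  set P := ∑ i, x i ^ 2
  set Q := ∑ i, y i ^ 2
  have hxc : ∑ i, x i ^ 2 * c i ≤ (α - 1) * P := by
    rw [hdiv fun i => x i ^ 2] at hxα; linarith
  have hyc : ∑ i, y i ^ 2 * c i ≤ (β - 1) * Q := by
    rw [hdiv fun i => y i ^ 2] at hyβ; linarith
  have hcross : 2 * ∑ i, x i * y i * c i ≤ (β - 1) * P + (α - 1) * Q := by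
    have hP : 0 ≤ P := sum_nonneg fun i _ => sq_nonneg _
    have hQ : 0 ≤ Q := sum_nonneg fun i _ => sq_nonneg _
    refine two_mul_le_add_of_sq_le_mul (by nlinarith) (by nlinarith) ?_
    calc (∑ i, x i * y i * c i) ^ 2 ≤ (∑ i, x i ^ 2 * c i) * ∑ i, y i ^ 2 * c i :=
          sum_sq_le_sum_mul_sum_of_sq_le_mul _ (fun i _ => mul_nonneg (sq_nonneg _) (hc i))
            (fun i _ => mul_nonneg (sq_nonneg _) (hc i)) fun i _ => le_of_eq (by ring)
      _ ≤ ((α - 1) * P) * ((β - 1) * Q) :=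
          mul_le_mul hxc hyc (sum_nonneg fun i _ => mul_nonneg (sq_nonneg _) (hc i))
            (by nlinarith)
      _ = (β - 1) * P * ((α - 1) * Q) := by ring
  have hR : 0 < ∑ i, x i * y i := sum_pos (fun i _ => mul_pos (hx i) (hy i)) univ_nonempty
  have hsq : ∀ t : ι → ℝ, ∑ i, (x i + y i) ^ 2 * t i
      = ∑ i, x i ^ 2 * t i + ∑ i, y i ^ 2 * t i + 2 * ∑ i, x i * y i * t i := fun t => by
    rw [mul_sum, ← sum_add_distrib, ← sum_add_distrib]
    exact sum_congr rfl fun i _ => by ring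
  have hsq1 := hsq fun _ => 1
  simp only [mul_one] at hsq1
  rw [hdiv fun i => (x i + y i) ^ 2, hsq, hsq1]
  nlinarith [mul_pos hR (show 0 < α + β - 2 by linarith)]

lemma sum_one_div_one_sub_lt_card_mul {z : ι → ℝ} {γ : ℝ} (hz : ∀ i, 0 < z i)
    (hz1 : ∀ i, z i < 1) (h : ∑ i, z i ^ 2 / (1 - z i) < γ * ∑ i, z i ^ 2) :
    ∑ i, 1 / (1 - z i) < Fintype.card ι * γ := by
  have hmono : Monovary (fun i => z i ^ 2) fun i => 1 / (1 - z i) := fun i j hij => by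
    have := (one_div_lt_one_div (sub_pos.mpr (hz1 i)) (sub_pos.mpr (hz1 j))).mp hij
    exact pow_le_pow_left₀ (hz i).le (by linarith) 2
  have hZ : 0 < ∑ i, z i ^ 2 := sum_pos (fun i _ => pow_pos (hz i) 2) univ_nonempty
  refine lt_of_mul_lt_mul_left ?_ hZ.le
  calc (∑ i, z i ^ 2) * ∑ i, 1 / (1 - z i)
      ≤ Fintype.card ι * ∑ i, z i ^ 2 * (1 / (1 - z i)) := hmono.sum_mul_sum_le_card_mul_sum
    _ < Fintype.card ι * (γ * ∑ i, z i ^ 2) := by simpa only [mul_one_div] using by gcongr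
    _ = (∑ i, z i ^ 2) * (Fintype.card ι * γ) := by ring

lemma card_lt_mul_sum_one_sub {z : ι → ℝ} {γ : ℝ} (hz : ∀ i, 0 < z i) (hz1 : ∀ i, z i < 1)
    (h : ∑ i, z i ^ 2 / (1 - z i) < γ * ∑ i, z i ^ 2) :
    (Fintype.card ι : ℝ) < γ * ∑ i, (1 - z i) := by
  have hN : (0 : ℝ) < Fintype.card ι := Nat.cast_pos.mpr Fintype.card_pos
  have hu : 0 < ∑ i, (1 - z i) := sum_pos (fun i _ => sub_pos.mpr (hz1 i)) univ_nonempty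
  have := (card_sq_le_sum_mul_sum_one_div fun i => sub_pos.mpr (hz1 i)).trans_lt
    (mul_lt_mul_of_pos_left (sum_one_div_one_sub_lt_card_mul hz hz1 h) hu)
  nlinarith

end WeightedSums

theorem coexistence_average_bound_general {N : ℕ}
    (A B : Matrix (Fin N) (Fin N) ℝ) (hA : IsConnectedAdjMatrix A) (hB : IsConnectedAdjMatrix B)
    (τ₁ τ₂ : ℝ) (hτ₁ : 0 < τ₁) (hτ₂ : 0 < τ₂)
    (hA1 : 1 < τ₁ * specRad A) (hB1 : 1 < τ₂ * specRad B)
    (xhat yhat : Fin N → ℝ)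
    (hce : IsCoexistenceEq A B τ₁ τ₂ xhat yhat) :
    (1 / (N : ℝ)) * ((∑ i, xhat i) + ∑ i, yhat i) <
      1 - 1 / (τ₁ * specRad A + τ₂ * specRad B - 1) := by
  set γ := τ₁ * specRad A + τ₂ * specRad B - 1
  have hγ : 1 < γ := by linarith
  rcases Nat.eq_zero_or_pos N with rfl | hN
  · -- the left side is `1 / 0 * 0 = 0`
    simpa using one_div_lt_one_div_of_lt one_pos hγ
  have : Nonempty (Fin N) := Fin.pos_iff_nonempty.mp hN
  obtain ⟨hx, hy, hxy, heqx, heqy⟩ := hce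
  have hw : ∀ i, 0 < 1 - xhat i - yhat i := fun i => by linarith [hxy i]
  have hw1 : ∀ i, 1 - xhat i - yhat i ≤ 1 := fun i => by linarith [hx i, hy i]
  have hxA := sum_sq_div_le_specRad_mul hA.1 hτ₁ heqx
  have hyB := sum_sq_div_le_specRad_mul hB.1 hτ₂ heqy
  have hkey := sum_add_sq_div_lt hA1 hB1 hx hy hw hw1 hxA hyB
  have hbound := card_lt_mul_sum_one_sub (z := xhat + yhat) (fun i => add_pos (hx i) (hy i))
    hxy (by simpa only [Pi.add_apply, sub_sub] using hkey)
  simp only [Fintype.card_fin, Pi.add_apply, sum_sub_distrib, sum_add_distrib, sum_const,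
    card_univ, nsmul_eq_mul, mul_one] at hbound
  have hfrac : (N : ℝ) / γ < N - ((∑ i, xhat i) + ∑ i, yhat i) :=
    (div_lt_iff₀' (by linarith)).mpr hbound
  rw [one_div_mul_eq_div, div_lt_iff₀ (Nat.cast_pos.mpr hN), sub_mul, one_mul, one_div_mul_eq_div]
  linarith

/-- **Proposition 2.** Under the single-virus survival conditions
`τ₁·λ(A) > 1`, `τ₂·λ(B) > 1` and the coexistence conditions
`τ₁·λ(diag(1 − y*)·A) > 1`, `τ₂·λ(diag(1 − x*)·B) > 1`, every coexistence equilibrium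
`(x̂, ŷ)` for `(A, B, τ₁, τ₂)` satisfies
`(1/N)·(Σ_i x̂_i + Σ_i ŷ_i) < 1 − 1/(τ₁·λ(A) + τ₂·λ(B) − 1)`. -/
theorem coexistence_average_bound {N : ℕ}
    (A B : Matrix (Fin N) (Fin N) ℝ) (hA : IsConnectedAdjMatrix A) (hB : IsConnectedAdjMatrix B)
    (τ₁ τ₂ : ℝ) (hτ₁ : 0 < τ₁) (hτ₂ : 0 < τ₂)
    (hA1 : 1 < τ₁ * specRad A) (hB1 : 1 < τ₂ * specRad B)
    (xstar ystar : Fin N → ℝ)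
    (hxs : IsSISFixedPoint A τ₁ xstar) (hys : IsSISFixedPoint B τ₂ ystar)
    (hcoex1 : 1 < τ₁ * specRad (Matrix.diagonal (fun i => 1 - ystar i) * A))
    (hcoex2 : 1 < τ₂ * specRad (Matrix.diagonal (fun i => 1 - xstar i) * B))
    (xhat yhat : Fin N → ℝ)
    (hce : IsCoexistenceEq A B τ₁ τ₂ xhat yhat) :
    (1 / (N : ℝ)) * ((∑ i, xhat i) + ∑ i, yhat i) <
      1 - 1 / (τ₁ * specRad A + τ₂ * specRad B - 1) :=
  coexistence_average_bound_general A B hA hB τ₁ τ₂ hτ₁ hτ₂ hA1 hB1 xhat yhat hce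
end
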